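/- A collectionwise normal T₁ space X is metrizable if there is a sequence of open covers {𝒰_n}_{n≥1} such that for each x ∈ X the family {st(x,𝒰_n)}_{n≥1} is a neighborhood basis at x. (Bing's criterion.) -/

import Mathlib

noncomputable section
open Set Topology TopologicalSpace

/-- `𝒰` is an open cover of `X`. -/
def IsOpenCover {X : Type} [TopologicalSpace X] (𝒰 : Set (Set X)) : Prop :=
  (∀ U ∈ 𝒰, IsOpen U) ∧ ⋃₀ 𝒰 = univ

/-- Star of a point with respect to a family of sets. -/
def ptStar {X : Type} (x : X) (𝒰 : Set (Set X)) : Set X := ⋃₀ {U | U ∈ 𝒰 ∧ x ∈ U}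

/-- Star of a set with respect to a family of sets. -/
def setStar {X : Type} (A : Set X) (𝒰 : Set (Set X)) : Set X :=
  ⋃₀ {U | U ∈ 𝒰 ∧ (U ∩ A).Nonempty}

/-- `𝒱` star-refines `𝒰`. -/
def StarRefines {X : Type} (𝒱 𝒰 : Set (Set X)) : Prop :=
  ∀ x : X, ∃ U ∈ 𝒰, ptStar x 𝒱 ⊆ U

/-- A continuous partition of unity viewed as a map into `l¹(S)` with image in `Δ(S)`. -/
def IsPU {X S : Type} [TopologicalSpace X] (f : X → lp (fun _ : S => ℝ) 1) : Prop :=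
  Continuous f ∧ ∀ x : X, (∀ s : S, 0 ≤ f x s) ∧ HasSum (fun s => f x s) 1

/-- The partition of unity `f` is `𝒰`-small: each carrier lies in a member of `𝒰`. -/
def IsUSmall {X S : Type} [TopologicalSpace X] (𝒰 : Set (Set X))
    (f : X → lp (fun _ : S => ℝ) 1) : Prop :=
  ∀ s : S, ∃ U ∈ 𝒰, {x : X | f x s ≠ 0} ⊆ U

/-- There exists a `𝒰`-small partition of unity on `X`. -/
def ExistsUSmallPU {X : Type} [TopologicalSpace X] (𝒰 : Set (Set X)) : Prop :=
  ∃ (S : Type) (f : X → lp (fun _ : S => ℝ) 1), IsPU f ∧ IsUSmall 𝒰 f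

/-- An indexed family of sets is discrete. -/
def DiscreteFam {X S : Type} [TopologicalSpace X] (A : S → Set X) : Prop :=
  ∀ x : X, ∃ N ∈ nhds x, {s : S | (A s ∩ N).Nonempty}.Subsingleton

/-- A family of sets (as a set of sets) is discrete. -/
def DiscreteSetFam {X : Type} [TopologicalSpace X] (𝒜 : Set (Set X)) : Prop :=
  ∀ x : X, ∃ N ∈ nhds x, {A | A ∈ 𝒜 ∧ (A ∩ N).Nonempty}.Subsingleton

/-- `𝒰` has a σ-discrete closed refinement. -/
def HasSigmaDiscreteClosedRefinement {X : Type} [TopologicalSpace X]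
    (𝒰 : Set (Set X)) : Prop :=
  ∃ D : ℕ → Set (Set X), (∀ n, DiscreteSetFam (D n)) ∧
    (∀ n, ∀ F ∈ D n, IsClosed F) ∧
    (∀ n, ∀ F ∈ D n, ∃ U ∈ 𝒰, F ⊆ U) ∧
    ⋃₀ (⋃ n, D n) = univ

/-- `X` is collectionwise normal. -/
def CwNormal (X : Type) [TopologicalSpace X] : Prop :=
  ∀ (S : Type) (A : S → Set X), (∀ s, IsClosed (A s)) → DiscreteFam A →
    ∃ V : S → Set X, (∀ s, IsOpen (V s)) ∧ (∀ s, A s ⊆ V s) ∧ DiscreteFam V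

/-!
A development `u` makes every open cover `𝒰` σ-discretely closed-refinable: well-order `𝒰` and
let `F n α` consist of the points whose `u n`-star lies in `α` but which lie in no earlier member.
The family `F n` is discrete because a point `x` has the neighbourhood `β ∩ V`, with `β` the first
member containing `x` and `V ∈ u n` containing `x`, and this meets `F n α` only for `α = β`.
Collectionwise normality expands `F n` to a discrete open family inside `𝒰`, and Urysohn functions
on it assemble to a continuous map `X → ℓ¹(𝒰)` sending points `x ∈ F n α` and `y ∉ α` at distance
`≥ 1`. Applied to the covers `u n` themselves, these countably many maps embed `X` into a countable
product of metric spaces, because the stars `st(x, u n)` form a neighbourhood basis.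
-/

section DiscreteFam

variable {X S : Type} [TopologicalSpace X]

theorem DiscreteFam.eq_of_mem {V : S → Set X} (hV : DiscreteFam V) {x : X} {s t : S}
    (hs : x ∈ V s) (ht : x ∈ V t) : s = t :=
  let ⟨_, hN, hsub⟩ := hV x
  hsub ⟨x, hs, mem_of_mem_nhds hN⟩ ⟨x, ht, mem_of_mem_nhds hN⟩

theorem DiscreteFam.mono {V W : S → Set X} (hW : DiscreteFam W) (hVW : ∀ s, V s ⊆ W s) :
    DiscreteFam V := fun x =>
  let ⟨N, hN, hsub⟩ := hW x
  ⟨N, hN, hsub.anti fun _ hs => hs.mono (inter_subset_inter_left _ (hVW _))⟩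

theorem DiscreteFam.locallyFinite {V : S → Set X} (hV : DiscreteFam V) : LocallyFinite V :=
  fun x => (hV x).imp fun _ h => ⟨h.1, h.2.finite⟩

theorem discreteFam_cond {s t : Set X} (hs : IsClosed s) (ht : IsClosed t) (hst : Disjoint s t) :
    DiscreteFam fun b : Bool => cond b s t := by
  intro x
  by_cases hxs : x ∈ s
  · refine ⟨tᶜ, ht.isOpen_compl.mem_nhds (hst.notMem_of_mem_left hxs),
      (subsingleton_singleton (a := true)).anti ?_⟩
    rintro (_ | _) ⟨y, hyt, hyt'⟩
    exacts [absurd hyt hyt', rfl]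
  · refine ⟨sᶜ, hs.isOpen_compl.mem_nhds hxs, (subsingleton_singleton (a := false)).anti ?_⟩
    rintro (_ | _) ⟨y, hys, hys'⟩
    exacts [rfl, absurd hys hys']

theorem DiscreteFam.exists_continuous_lp {V : S → Set X} (hV : DiscreteFam V)
    (g : S → X → ℝ) (hg : ∀ s, Continuous (g s)) (hgV : ∀ s, Function.support (g s) ⊆ V s) :
    ∃ Φ : X → lp (fun _ : S => ℝ) 1, Continuous Φ ∧ ∀ x s, Φ x s = g s x := by
  classical
  refine ⟨fun x => ∑ᶠ t, lp.single 1 t (g t x), ?_, fun x s => ?_⟩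
  · refine continuous_finsum (fun t => (lp.isometry_single t).continuous.comp (hg t)) ?_
    refine hV.locallyFinite.subset fun t x hx => hgV t fun h => hx ?_
    simp only [h, lp.single_zero]
  · have hsupp : (Function.support fun t => lp.single 1 t (g t x)).Finite := by
      refine Subsingleton.finite fun t ht t' ht' => hV.eq_of_mem (x := x) ?_ ?_
      · exact hgV t fun h => ht (by simp only [h, lp.single_zero])
      · exact hgV t' fun h => ht' (by simp only [h, lp.single_zero])
    let ev : lp (fun _ : S => ℝ) 1 →+ ℝ :=
      (Pi.evalAddMonoidHom (fun _ : S => ℝ) s).comp (lp.coeFnAddMonoidHom _ 1)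
    calc (∑ᶠ t, lp.single 1 t (g t x)) s = ev (∑ᶠ t, lp.single 1 t (g t x)) := rfl
      _ = ∑ᶠ t, (lp.single 1 t (g t x) : S → ℝ) s := ev.map_finsum hsupp
      _ = g s x := by
        rw [finsum_eq_single _ s fun t ht => lp.single_apply_ne _ _ _ (Ne.symm ht),
          lp.single_apply_self]

end DiscreteFam

namespace CwNormal

variable {X : Type} [TopologicalSpace X]

theorem normalSpace (hX : CwNormal X) : NormalSpace X where
  normal s t hs ht hst := by
    obtain ⟨V, hVo, hsV, hVd⟩ := hX Bool _ (by simpa using ⟨ht, hs⟩) (discreteFam_cond hs ht hst)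
    exact ⟨V true, V false, hVo true, hVo false, hsV true, hsV false,
      disjoint_left.2 fun _ hx hx' => Bool.true_eq_false ▸ hVd.eq_of_mem hx hx'⟩

theorem exists_continuous_lp_separating (hX : CwNormal X) {S : Type} {F U : S → Set X}
    (hFc : ∀ s, IsClosed (F s)) (hFd : DiscreteFam F) (hUo : ∀ s, IsOpen (U s))
    (hFU : ∀ s, F s ⊆ U s) :
    ∃ Φ : X → lp (fun _ : S => ℝ) 1, Continuous Φ ∧
      ∀ x y s, x ∈ F s → ‖Φ x - Φ y‖ < 1 → y ∈ U s := by
  have := hX.normalSpace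
  obtain ⟨W, hWo, hFW, hWd⟩ := hX S F hFc hFd
  have hVo s : IsOpen (W s ∩ U s) := (hWo s).inter (hUo s)
  have urysohn s : ∃ g : C(X, ℝ), EqOn g 0 (W s ∩ U s)ᶜ ∧ EqOn g 1 (F s) :=
    (exists_continuous_zero_one_of_isClosed (hVo s).isClosed_compl (hFc s)
      (disjoint_compl_left.mono_right (subset_inter (hFW s) (hFU s)))).imp fun _ h => ⟨h.1, h.2.1⟩
  choose g hg0 hg1 using urysohn
  obtain ⟨Φ, hΦ, hΦg⟩ := (hWd.mono fun s => inter_subset_left).exists_continuous_lp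
    (fun s => g s) (fun s => (g s).continuous)
    (fun s x hx => not_not.1 fun hx' => hx (hg0 s hx'))
  refine ⟨Φ, hΦ, fun x y s hx hxy => ?_⟩
  have hcoord : |Φ x s - Φ y s| < 1 :=
    (lp.norm_apply_le_norm one_ne_zero (Φ x - Φ y) s).trans_lt hxy
  rw [hΦg, hΦg, hg1 s hx] at hcoord
  by_contra hy
  rw [hg0 s fun h => hy h.2] at hcoord
  norm_num at hcoord

end CwNormal

theorem isInducing_pi_of_forall_nhds {X ι : Type*} {Y : ι → Type*} [TopologicalSpace X]
    [∀ i, TopologicalSpace (Y i)] {Φ : ∀ i, X → Y i} (hΦ : ∀ i, Continuous (Φ i))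
    (h : ∀ x, ∀ T ∈ 𝓝 x, ∃ i, ∃ V ∈ 𝓝 (Φ i x), Φ i ⁻¹' V ⊆ T) :
    IsInducing fun x i => Φ i x := by
  refine isInducing_iff_nhds.2 fun x =>
    le_antisymm ((continuous_pi hΦ).tendsto x).le_comap fun T hT => ?_
  obtain ⟨i, V, hV, hVT⟩ := h x T hT
  exact Filter.mem_comap.2 ⟨Function.eval i ⁻¹' V, continuous_apply i |>.continuousAt hV, hVT⟩

section StarPiece

variable {X : Type} {u : ℕ → Set (Set X)} {𝒰 : Set (Set X)}

theorem mem_ptStar_self (h𝒰 : ⋃₀ 𝒰 = univ) (x : X) : x ∈ ptStar x 𝒰 :=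
  let ⟨U, hU, hxU⟩ := h𝒰 ▸ mem_univ x
  ⟨U, ⟨hU, hxU⟩, hxU⟩

def starPiece (u : ℕ → Set (Set X)) (𝒰 : Set (Set X)) (n : ℕ) (α : 𝒰) : Set X :=
  {x | ptStar x (u n) ⊆ α ∧ ∀ β : 𝒰, WellOrderingRel β α → x ∉ (β : Set X)}

theorem exists_wellOrderingRel_first_mem (h𝒰 : ⋃₀ 𝒰 = univ) (x : X) :
    ∃ α : 𝒰, x ∈ (α : Set X) ∧ ∀ β : 𝒰, WellOrderingRel β α → x ∉ (β : Set X) := by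
  obtain ⟨U, hU, hxU⟩ := h𝒰 ▸ mem_univ x
  obtain ⟨α, hxα, hmin⟩ :=
    WellOrderingRel.isWellOrder.wf.has_min {α : 𝒰 | x ∈ (α : Set X)} ⟨⟨U, hU⟩, hxU⟩
  exact ⟨α, hxα, fun β hβ hxβ => hmin β hxβ hβ⟩

theorem starPiece_subset (hu : ⋃₀ u n = univ) (α : 𝒰) : starPiece u 𝒰 n α ⊆ α :=
  fun x hx => hx.1 (mem_ptStar_self hu x)

theorem isClosed_starPiece [TopologicalSpace X] (hu : ∀ V ∈ u n, IsOpen V) (h𝒰 : ∀ U ∈ 𝒰, IsOpen U) (α : 𝒰) :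
    IsClosed (starPiece u 𝒰 n α) := by
  refine isOpen_compl_iff.1 (isOpen_iff_forall_mem_open.2 fun x hx => ?_)
  simp only [starPiece, mem_compl_iff, mem_ofPred_eq, not_and, not_forall, not_not] at hx
  by_cases hstar : ptStar x (u n) ⊆ α
  · obtain ⟨β, hβα, hxβ⟩ := hx hstar
    exact ⟨β, fun y hyβ hy => hy.2 β hβα hyβ, h𝒰 β β.2, hxβ⟩
  · obtain ⟨z, ⟨V, ⟨hV, hxV⟩, hzV⟩, hzα⟩ := not_subset.1 hstar
    exact ⟨V, fun y hyV hy => hzα (hy.1 ⟨V, ⟨hV, hyV⟩, hzV⟩), hu V hV, hxV⟩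

theorem discreteFam_starPiece [TopologicalSpace X] (hu : IsOpenCover (u n)) (h𝒰 : IsOpenCover 𝒰) :
    DiscreteFam (starPiece u 𝒰 n) := by
  intro x
  obtain ⟨β, hxβ, hβ⟩ := exists_wellOrderingRel_first_mem h𝒰.2 x
  obtain ⟨V, hV, hxV⟩ := hu.2 ▸ mem_univ x
  refine ⟨β ∩ V, Filter.inter_mem ((h𝒰.1 β β.2).mem_nhds hxβ) ((hu.1 V hV).mem_nhds hxV),
    (subsingleton_singleton (a := β)).anti ?_⟩
  rintro α ⟨y, hy, hyβ, hyV⟩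
  have hxα : x ∈ (α : Set X) := hy.1 ⟨V, ⟨hV, hyV⟩, hxV⟩
  rcases trichotomous_of WellOrderingRel α β with hαβ | hαβ | hβα
  exacts [absurd hxα (hβ α hαβ), hαβ, absurd hyβ (hy.2 β hβα)]

theorem exists_mem_starPiece [TopologicalSpace X]
    (hbasis : ∀ (x : X) (U : Set X), IsOpen U → x ∈ U → ∃ n, ptStar x (u n) ⊆ U)
    (h𝒰 : IsOpenCover 𝒰) (x : X) : ∃ n α, x ∈ starPiece u 𝒰 n α := by
  obtain ⟨α, hxα, hα⟩ := exists_wellOrderingRel_first_mem h𝒰.2 x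
  obtain ⟨n, hn⟩ := hbasis x α (h𝒰.1 α α.2) hxα
  exact ⟨n, α, hn, hα⟩

end StarPiece

/-- Bing's criterion: a collectionwise normal T₁ space with a sequence of open covers whose
stars at each point form a neighborhood basis is metrizable. -/
theorem stmt18 (X : Type) [TopologicalSpace X] [T1Space X] (hX : CwNormal X)
    (u : ℕ → Set (Set X)) (hu : ∀ n, IsOpenCover (u n))
    (hbasis : ∀ (x : X) (U : Set X), IsOpen U → x ∈ U → ∃ n, ptStar x (u n) ⊆ U) :
    MetrizableSpace X := by
  have maps (p : ℕ × ℕ) := hX.exists_continuous_lp_separating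
    (isClosed_starPiece (hu p.2).1 (hu p.1).1) (discreteFam_starPiece (hu p.2) (hu p.1))
    (fun α => (hu p.1).1 α α.2) (starPiece_subset (hu p.2).2)
  choose Φ hΦ hΦsep using maps
  refine (IsInducing.isEmbedding (isInducing_pi_of_forall_nhds hΦ ?_)).metrizableSpace
  intro x T hT
  obtain ⟨T', hT'T, hT', hxT'⟩ := mem_nhds_iff.1 hT
  obtain ⟨n, hnT'⟩ := hbasis x T' hT' hxT'
  obtain ⟨m, α, hx⟩ := exists_mem_starPiece hbasis (hu n) x
  refine ⟨(n, m), Metric.ball (Φ (n, m) x) 1, Metric.ball_mem_nhds _ one_pos, fun y hy => ?_⟩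
  have hyα : y ∈ (α : Set X) := hΦsep (n, m) x y α hx (by rwa [← dist_eq_norm, dist_comm])
  exact hT'T (hnT' ⟨α, ⟨α.2, starPiece_subset (hu m).2 α hx⟩, hyα⟩)
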